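/- Completeness of the sumcheck protocol: for any sumcheck instance (H, p, v) with v = ∑_{σ : vars p → H} eval p σ, H nonempty, and any ordering of the variables of p as a duplicate-free list, the recursively defined sumcheck interaction between the honest prover and the verifier accepts for every choice of verifier randomness. -/

import Mathlib

open MvPolynomial

/-- Partially evaluate `p` under a partial substitution `σ`. -/
noncomputable def inst {V R : Type*} [CommRing R]
    (p : MvPolynomial V R) (σ : V → Option R) : MvPolynomial V R :=
  aeval (fun x => (σ x).elim (X x) C) p

/-- Evaluate `p` fully, using `σ` where defined and `0` as a default elsewhere. -/
noncomputable def evalSubst {V R : Type*} [CommRing R]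
    (p : MvPolynomial V R) (σ : V → Option R) : R :=
  eval (fun x => (σ x).getD 0) p

/-- `ρ` overridden by `σ` (with `σ` taking priority on its domain). -/
def override {V R : Type*} (ρ σ : V → Option R) : V → Option R :=
  fun x => (σ x).elim (ρ x) some

/-- The partial substitution with domain `W` determined by a function `f : W → H`. -/
def toSubst {V R : Type*} [DecidableEq V] (W : Finset V) (H : Finset R)
    (f : ↥W → ↥H) : V → Option R :=
  fun x => if h : x ∈ W then some ((f ⟨x, h⟩ : ↥H) : R) else none

/-- The singleton substitution `[x ↦ r]`. -/
def single {V R : Type*} [DecidableEq V] (x : V) (r : R) : V → Option R :=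
  fun y => if y = x then some r else none

/-- A (possibly dishonest) deterministic prover: given the current sumcheck instance
`(H, p, v)`, the current variable, the remaining variables, the last randomness, and
its state, it returns a claimed univariate polynomial and a new state. -/
abbrev Prover (V F S : Type*) [CommRing F] : Type _ :=
  (Finset F × MvPolynomial V F × F) → V → List V → F → S → MvPolynomial V F × S

/-- The recursively defined sumcheck interaction: returns the verifier's verdict. -/
noncomputable def sumcheck {V F S : Type*} [CommRing F] [DecidableEq V]
    (pr : Prover V F S) :
    S → Finset F → MvPolynomial V F → F → F → List (V × F) → Prop
  | s, _H, p, v, _r, [] => v = evalSubst p (fun _ => none)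
  | s, H, p, v, r, (x, r') :: rm =>
      let res := pr (H, p, v) x (rm.map Prod.fst) r s
      (↑res.1.vars : Set V) ⊆ {x} ∧
      res.1.totalDegree ≤ p.totalDegree ∧
      v = ∑ h ∈ H, evalSubst res.1 (single x h) ∧
      sumcheck pr res.2 H (inst p (single x r')) (evalSubst res.1 (single x r')) r' rm

/-- The honest prover of the sumcheck protocol. -/
noncomputable def honestProver {V F : Type*} [CommRing F] [DecidableEq V] :
    Prover V F Unit :=
  fun I x xs _ _ => (∑ f : (↥xs.toFinset → ↥I.1), inst I.2.1 (toSubst xs.toFinset I.1 f), ())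

/-!
Induction on the rounds, with the invariant `vars p ⊆ W` and `v = ∑_{f : W → H} p[f]`, where `W`
is the set of variables still to be sumchecked. In the round of `x`, the honest message
`q = ∑_{f : W \ {x} → H} p[f]` only involves `x`; summing `q[x ↦ h]` over `h ∈ H` regroups the sum
over `W → H`, so the verifier's check is the invariant itself. Since `x` is not summed over,
substituting `x ↦ r'` commutes with the partial sum, so `q[x ↦ r']` is the sum of `p[x ↦ r']`
over `W \ {x} → H`: the invariant holds for the next round.
-/

section Substitution

variable {V R : Type*}

lemma override_comm {ρ σ : V → Option R} (h : ∀ y, ρ y = none ∨ σ y = none) :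
    override ρ σ = override σ ρ := by
  funext y
  rcases h y with h | h
  · simp only [override, h]; cases σ y <;> rfl
  · simp only [override, h]; cases ρ y <;> rfl

variable [DecidableEq V]

lemma sum_toSubst_empty {M : Type*} [AddCommMonoid M] (H : Finset R) (G : (V → Option R) → M) :
    ∑ f : ↥(∅ : Finset V) → ↥H, G (toSubst ∅ H f) = G fun _ => none :=
  Fintype.sum_unique _

lemma override_single_toSubst_comm {x : V} {W : Finset V} (hx : x ∉ W) (H : Finset R) (r : R)
    (f : ↥W → ↥H) :
    override (single x r) (toSubst W H f) = override (toSubst W H f) (single x r) :=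
  override_comm fun y => by
    by_cases hyx : y = x
    · subst hyx; simp [toSubst, hx]
    · simp [single, hyx]

def arrowInsertEquivProd {x : V} {W : Finset V} (hx : x ∉ W) (β : Type*) :
    (↥(insert x W) → β) ≃ β × (↥W → β) :=
  ((Finset.subtypeInsertEquivOption hx).arrowCongr (Equiv.refl β)).trans Equiv.piOptionEquivProd

lemma toSubst_arrowInsertEquivProd_symm {x : V} {W : Finset V} (hx : x ∉ W) (H : Finset R)
    (h : ↥H) (f : ↥W → ↥H) :
    toSubst (insert x W) H ((arrowInsertEquivProd hx ↥H).symm (h, f))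
      = override (single x (h : R)) (toSubst W H f) := by
  funext y
  by_cases hyx : y = x
  · subst hyx
    simp [toSubst, override, single, hx, arrowInsertEquivProd, Finset.subtypeInsertEquivOption]
  · by_cases hy : y ∈ W
    · simp [toSubst, override, single, hy, hyx, arrowInsertEquivProd,
        Finset.subtypeInsertEquivOption]
    · simp [toSubst, override, single, hy, hyx]

lemma sum_toSubst_insert {M : Type*} [AddCommMonoid M] {x : V} {W : Finset V} (hx : x ∉ W)
    (H : Finset R) (G : (V → Option R) → M) :
    ∑ g : ↥(insert x W) → ↥H, G (toSubst (insert x W) H g)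
      = ∑ h ∈ H, ∑ f : ↥W → ↥H, G (override (single x h) (toSubst W H f)) := by
  rw [← (arrowInsertEquivProd hx ↥H).symm.sum_comp, Fintype.sum_prod_type, ← Finset.sum_coe_sort H]
  simp only [toSubst_arrowInsertEquivProd_symm]

end Substitution

section Polynomial

variable {V W R : Type*} [CommRing R]

lemma evalSubst_inst (p : MvPolynomial V R) (σ τ : V → Option R) :
    evalSubst (inst p σ) τ = evalSubst p (override τ σ) := by
  rw [evalSubst, evalSubst, inst, aeval_eq_bind₁, eval, eval, eval₂Hom_bind₁]
  congr 2
  funext y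
  simp only [override]
  cases σ y <;> simp

lemma evalSubst_finsetSum {ι : Type*} (s : Finset ι) (p : ι → MvPolynomial V R) (σ : V → Option R) :
    evalSubst (∑ i ∈ s, p i) σ = ∑ i ∈ s, evalSubst (p i) σ :=
  map_sum (eval _) p s

lemma mem_vars_inst {p : MvPolynomial V R} {σ : V → Option R} {y : V}
    (hy : y ∈ (inst p σ).vars) : y ∈ p.vars ∧ σ y = none := by
  rw [inst, aeval_eq_bind₁] at hy
  obtain ⟨i, hi, hyi⟩ := mem_vars_bind₁ _ _ hy
  cases h : σ i with
  | none =>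
    simp only [h, Option.elim] at hyi
    obtain rfl : y = i := Multiset.mem_singleton.1 <| Multiset.mem_of_le (degrees_X' i) <| by
      classical rwa [vars_def, Multiset.mem_toFinset] at hyi
    exact ⟨hi, h⟩
  | some a => simp [h, Option.elim, vars_C] at hyi

lemma vars_inst_single_subset [DecidableEq V] (p : MvPolynomial V R) (x : V) (r : R) :
    (inst p (single x r)).vars ⊆ p.vars.erase x := fun y hy => by
  obtain ⟨hyp, hnone⟩ := mem_vars_inst hy
  exact Finset.mem_erase.2 ⟨fun hyx => by simp [single, hyx] at hnone, hyp⟩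

lemma totalDegree_aeval_le {f : V → MvPolynomial W R} (hf : ∀ i, (f i).totalDegree ≤ 1)
    (p : MvPolynomial V R) : (aeval f p).totalDegree ≤ p.totalDegree := by
  conv_lhs => rw [p.as_sum, map_sum]
  refine (totalDegree_finsetSum _ _).trans (Finset.sup_le fun s hs => ?_)
  rw [aeval_monomial, algebraMap_eq]
  calc (C (p.coeff s) * s.prod fun i k => f i ^ k).totalDegree
      ≤ ∑ i ∈ s.support, (f i ^ s i).totalDegree := by
        refine (totalDegree_mul _ _).trans ?_
        rw [totalDegree_C, zero_add]
        exact totalDegree_finsetProd _ _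
    _ ≤ ∑ i ∈ s.support, s i := Finset.sum_le_sum fun i _ =>
        (totalDegree_pow _ _).trans (by simpa using Nat.mul_le_mul_left (s i) (hf i))
    _ ≤ p.totalDegree := le_totalDegree hs

lemma totalDegree_X_le (i : V) : (X i : MvPolynomial V R).totalDegree ≤ 1 :=
  (totalDegree_monomial_le _ _).trans (by simp)

lemma totalDegree_inst_le (p : MvPolynomial V R) (σ : V → Option R) :
    (inst p σ).totalDegree ≤ p.totalDegree :=
  totalDegree_aeval_le (fun i => by cases σ i <;> simp [totalDegree_X_le, totalDegree_C]) p

end Polynomial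

section PartialSum

variable {V R : Type*} [CommRing R] [DecidableEq V]

/-- The honest prover's message when `W` is the set of remaining variables. -/
noncomputable def partialSum (W : Finset V) (H : Finset R) (p : MvPolynomial V R) :
    MvPolynomial V R :=
  ∑ f : ↥W → ↥H, inst p (toSubst W H f)

variable (W : Finset V) (H : Finset R) (p : MvPolynomial V R)

lemma vars_partialSum_subset : (partialSum W H p).vars ⊆ p.vars \ W := by
  intro y hy
  obtain ⟨f, -, hyf⟩ := Finset.mem_biUnion.1 (vars_sum_subset _ _ hy)
  obtain ⟨hyp, hnone⟩ := mem_vars_inst hyf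
  refine Finset.mem_sdiff.2 ⟨hyp, fun hyW => ?_⟩
  simp [toSubst, hyW] at hnone

lemma totalDegree_partialSum_le : (partialSum W H p).totalDegree ≤ p.totalDegree :=
  (totalDegree_finsetSum _ _).trans (Finset.sup_le fun _ _ => totalDegree_inst_le p _)

lemma evalSubst_partialSum (σ : V → Option R) :
    evalSubst (partialSum W H p) σ = ∑ f : ↥W → ↥H, evalSubst p (override σ (toSubst W H f)) := by
  simp only [partialSum, evalSubst_finsetSum, evalSubst_inst]

lemma sum_evalSubst_partialSum_single {W : Finset V} {x : V} (hx : x ∉ W) :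
    ∑ h ∈ H, evalSubst (partialSum W H p) (single x h)
      = ∑ g : ↥(insert x W) → ↥H, evalSubst p (toSubst (insert x W) H g) := by
  simp only [evalSubst_partialSum, sum_toSubst_insert hx]

lemma evalSubst_partialSum_single {W : Finset V} {x : V} (hx : x ∉ W) (r : R) :
    evalSubst (partialSum W H p) (single x r)
      = ∑ f : ↥W → ↥H, evalSubst (inst p (single x r)) (toSubst W H f) := by
  simp only [evalSubst_partialSum, evalSubst_inst, override_single_toSubst_comm hx]

end PartialSum

theorem sumcheck_honestProver {V F : Type*} [CommRing F] [DecidableEq V] (H : Finset F) :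
    ∀ (rm : List (V × F)) (s : Unit) (p : MvPolynomial V F) (v r : F),
      (rm.map Prod.fst).Nodup → p.vars ⊆ (rm.map Prod.fst).toFinset →
      v = ∑ f : ↥(rm.map Prod.fst).toFinset → ↥H, evalSubst p (toSubst _ H f) →
      sumcheck honestProver s H p v r rm
  | [], _, p, _, _, _, _, hv => hv.trans (sum_toSubst_empty H (evalSubst p))
  | (x, r') :: rm, _, p, v, _, hnodup, hvars, hv => by
    rw [List.map_cons, List.nodup_cons, ← List.mem_toFinset] at hnodup
    rw [List.map_cons, List.toFinset_cons] at hvars hv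
    have hpvars : p.vars \ (rm.map Prod.fst).toFinset ⊆ {x} := fun y hy => by
      obtain ⟨hyp, hyW⟩ := Finset.mem_sdiff.1 hy
      simpa [hyW] using hvars hyp
    refine ⟨?_, totalDegree_partialSum_le _ H p, ?_, ?_⟩
    · exact_mod_cast (vars_partialSum_subset _ H p).trans hpvars
    · exact hv.trans (sum_evalSubst_partialSum_single H p hnodup.1).symm
    · exact sumcheck_honestProver H rm () _ _ r' hnodup.2
        ((vars_inst_single_subset p x r').trans (Finset.subset_insert_iff.1 hvars))
        (evalSubst_partialSum_single H p hnodup.1 r')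

theorem sumcheck_completeness_general {V F : Type*} [Field F] [DecidableEq V]
    (H : Finset F) (p : MvPolynomial V F) (v : F) (rm : List (V × F)) (r : F) (s : Unit)
    (hv : v = ∑ f : (↥p.vars → ↥H), evalSubst p (toSubst p.vars H f))
    (hvars : p.vars = (rm.map Prod.fst).toFinset)
    (hnodup : (rm.map Prod.fst).Nodup) :
    sumcheck honestProver s H p v r rm := by
  rw [hvars] at hv
  exact sumcheck_honestProver H rm s p v r hnodup hvars.subset hv

theorem sumcheck_completeness {V F : Type*} [Field F] [DecidableEq V]
    (H : Finset F) (p : MvPolynomial V F) (v : F) (rm : List (V × F)) (r : F) (s : Unit)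
    (hv : v = ∑ f : (↥p.vars → ↥H), evalSubst p (toSubst p.vars H f))
    (hvars : p.vars = (rm.map Prod.fst).toFinset)
    (hnodup : (rm.map Prod.fst).Nodup)
    (hH : H.Nonempty) :
    sumcheck honestProver s H p v r rm :=
  sumcheck_completeness_general H p v rm r s hv hvars hnodup
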